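/- arXiv:2310.04154 — 2 statements merged into one kernel-verified Lean document; each statement's English description precedes it below -/
import Mathlib

section
/- The abelianization of the group TVPₙ (presented with generators λ_{ij} for 1 ≤ i ≠ j ≤ n and γ₁,…,γₙ, with relations including λ_{ij} = γᵢγⱼλ_{ji}γⱼγᵢ, γᵢ² = e, commutation of the γ's with each other and with the λ's, and the mixed braid-type relations) is isomorphic to Z^{n(n-1)/2} ⊕ (Z/2Z)ⁿ. -/
/-- Generators of TVPₙ: `Sum.inl ⟨(i,j), h⟩` is λ_{ij} (i ≠ j), `Sum.inr j` is γⱼ. -/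
abbrev TVPGen (n : ℕ) := {p : Fin n × Fin n // p.1 ≠ p.2} ⊕ Fin n

def lamP {n : ℕ} (i j : Fin n) (h : i ≠ j) : FreeGroup (TVPGen n) :=
  FreeGroup.of (Sum.inl ⟨(i, j), h⟩)

def gamP {n : ℕ} (i : Fin n) : FreeGroup (TVPGen n) :=
  FreeGroup.of (Sum.inr i)

/-- Defining relations of the twisted virtual pure braid group TVPₙ. -/
def tvpRels (n : ℕ) : Set (FreeGroup (TVPGen n)) :=
  {r |
    (∃ (i j k l : Fin n) (hij : i ≠ j) (hkl : k ≠ l), i ≠ k ∧ i ≠ l ∧ j ≠ k ∧ j ≠ l ∧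
      r = lamP i j hij * lamP k l hkl * (lamP k l hkl * lamP i j hij)⁻¹) ∨
    (∃ (i j k : Fin n) (hki : k ≠ i) (hkj : k ≠ j) (hij : i ≠ j),
      r = lamP k i hki * lamP k j hkj * lamP i j hij *
        (lamP i j hij * lamP k j hkj * lamP k i hki)⁻¹) ∨
    (∃ i, r = gamP i ^ 2) ∨
    (∃ i j, i ≠ j ∧ r = gamP i * gamP j * (gamP j * gamP i)⁻¹) ∨
    (∃ (i j k : Fin n) (hij : i ≠ j), i ≠ k ∧ j ≠ k ∧
      r = lamP i j hij * gamP k * (gamP k * lamP i j hij)⁻¹) ∨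
    (∃ (i j : Fin n) (hij : i ≠ j),
      r = lamP i j hij *
        (gamP i * gamP j * lamP j i hij.symm * gamP j * gamP i)⁻¹)}

/-! Once the group is abelianized, every relation of commutator shape becomes vacuous,
`γᵢ² = 1` survives, and `λᵢⱼ = γᵢγⱼλⱼᵢγⱼγᵢ` collapses to `λᵢⱼ = λⱼᵢ` because the `γ`'s
square to `1`. So the abelianization is free abelian on the unordered pairs `{i, j}` times
`(ℤ/2)ⁿ` on the `γᵢ`; the isomorphism and its inverse are both given on generators. -/

open Multiplicative

theorem mul_mul_mul_mul_eq_of_sq_eq_one {G : Type*} [CommGroup G] {a b x : G}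
    (ha : a ^ 2 = 1) (hb : b ^ 2 = 1) : a * b * x * b * a = x := by
  calc a * b * x * b * a = x * a ^ 2 * b ^ 2 := by simp only [pow_two]; ac_rfl
    _ = x := by rw [ha, hb, mul_one, mul_one]

theorem MonoidHom.ext_mzmod {n : ℕ} {G : Type*} [Group G]
    {f g : Multiplicative (ZMod n) →* G} (h : f (ofAdd 1) = g (ofAdd 1)) : f = g := by
  refine MonoidHom.ext fun x => ?_
  obtain ⟨k, hk⟩ := ZMod.intCast_surjective (toAdd x)
  have hx : x = ofAdd (1 : ZMod n) ^ k := by rw [← ofAdd_zsmul, zsmul_one, hk, ofAdd_toAdd]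
  rw [hx, map_zpow, map_zpow, h]

theorem MonoidHom.prod_ext {M N P : Type*} [Monoid M] [Monoid N] [CommMonoid P]
    {f g : M × N →* P} (hl : f.comp (inl M N) = g.comp (inl M N))
    (hr : f.comp (inr M N) = g.comp (inr M N)) : f = g := by
  rw [← f.coprod_unique, ← g.coprod_unique, hl, hr]

def MonoidHom.piCoprod {ι M : Type*} [Fintype ι] {N : ι → Type*} [∀ i, Monoid (N i)]
    [CommMonoid M] (ϕ : ∀ i, N i →* M) : (∀ i, N i) →* M :=
  noncommPiCoprod ϕ fun _ _ _ _ _ => Commute.all _ _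

@[simp]
theorem MonoidHom.piCoprod_mulSingle {ι M : Type*} [Fintype ι] [DecidableEq ι] {N : ι → Type*}
    [∀ i, Monoid (N i)] [CommMonoid M] (ϕ : ∀ i, N i →* M) (i : ι) (y : N i) :
    piCoprod ϕ (Pi.mulSingle i y) = ϕ i y :=
  noncommPiCoprod_mulSingle _ _ _

def zmodPowersHom {n : ℕ} {G : Type*} [Group G] (g : G) (hg : g ^ n = 1) :
    Multiplicative (ZMod n) →* G :=
  AddMonoidHom.toMultiplicativeLeft
    (ZMod.lift (A := Additive G) n
      ⟨(zpowersHom G g).toAdditiveRight, by simpa using congrArg Additive.ofMul hg⟩)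

@[simp]
theorem zmodPowersHom_ofAdd_one {n : ℕ} {G : Type*} [Group G] (g : G) (hg : g ^ n = 1) :
    zmodPowersHom g hg (ofAdd 1) = g := by
  rw [zmodPowersHom, AddMonoidHom.toMultiplicativeLeft_apply_apply, toAdd_ofAdd,
    ← Int.cast_one, ZMod.lift_coe]
  simp

namespace TVP

variable {n : ℕ}

theorem lift_eq_one_of_mem_tvpRels {G : Type*} [CommGroup G] (g : TVPGen n → G)
    (hgam : ∀ i, g (.inr i) ^ 2 = 1)
    (hlam : ∀ i j (h : i ≠ j), g (.inl ⟨(i, j), h⟩) = g (.inl ⟨(j, i), h.symm⟩))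
    {r : FreeGroup (TVPGen n)} (hr : r ∈ tvpRels n) : FreeGroup.lift g r = 1 := by
  rcases hr with ⟨i, j, k, l, hij, hkl, -, -, -, -, rfl⟩ | ⟨i, j, k, hki, hkj, hij, rfl⟩ |
    ⟨i, rfl⟩ | ⟨i, j, -, rfl⟩ | ⟨i, j, k, hij, -, -, rfl⟩ | ⟨i, j, hij, rfl⟩ <;>
    simp only [lamP, gamP, map_mul, map_inv, map_pow, FreeGroup.lift_apply_of, mul_inv_eq_one]
  · exact mul_comm _ _
  · ac_rfl
  · exact hgam i
  · exact mul_comm _ _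
  · exact mul_comm _ _
  · rw [mul_mul_mul_mul_eq_of_sq_eq_one (hgam i) (hgam j), hlam]

abbrev Ab (n : ℕ) := Abelianization (PresentedGroup (tvpRels n))

def toAb (n : ℕ) : FreeGroup (TVPGen n) →* Ab n :=
  Abelianization.of.comp (PresentedGroup.mk _)

theorem toAb_eq_one {r : FreeGroup (TVPGen n)} (hr : r ∈ tvpRels n) : toAb n r = 1 := by
  simp [toAb, PresentedGroup.one_of_mem hr]

theorem toAb_gamP_sq (i : Fin n) : toAb n (gamP i) ^ 2 = 1 := by
  rw [← map_pow]
  exact toAb_eq_one (Or.inr <| Or.inr <| Or.inl ⟨i, rfl⟩)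

theorem toAb_lamP_swap {i j : Fin n} (h : i ≠ j) :
    toAb n (lamP i j h) = toAb n (lamP j i h.symm) := by
  have := toAb_eq_one (Or.inr <| Or.inr <| Or.inr <| Or.inr <| Or.inr ⟨i, j, h, rfl⟩)
  rwa [map_mul, map_inv, mul_inv_eq_one, map_mul, map_mul, map_mul, map_mul,
    mul_mul_mul_mul_eq_of_sq_eq_one (toAb_gamP_sq i) (toAb_gamP_sq j)] at this

def edgeAb (n : ℕ) : Sym2 (Fin n) → Ab n :=
  Sym2.lift ⟨fun i j => if h : i = j then 1 else toAb n (lamP i j h), fun i j => by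
    by_cases h : i = j
    · subst h; rfl
    · simp only [dif_neg h, dif_neg (Ne.symm h)]
      exact toAb_lamP_swap h⟩

theorem edgeAb_mk {i j : Fin n} (h : i ≠ j) : edgeAb n s(i, j) = toAb n (lamP i j h) := by
  simp [edgeAb, h]

abbrev Edge (n : ℕ) := {z : Sym2 (Fin n) // ¬ z.IsDiag}

abbrev Model (n : ℕ) := (Edge n → Multiplicative ℤ) × (Fin n → Multiplicative (ZMod 2))

def genModel : TVPGen n → Model n
  | .inl p => (Pi.mulSingle ⟨s(p.1.1, p.1.2), Sym2.mk_isDiag_iff.not.2 p.2⟩ (ofAdd 1), 1)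
  | .inr i => (1, Pi.mulSingle i (ofAdd 1))

theorem genModel_inr_sq (i : Fin n) : genModel (.inr i) ^ 2 = 1 := by
  simp [genModel, ← Pi.mulSingle_pow, ← ofAdd_nsmul, show (2 : ZMod 2) = 0 from rfl]

theorem genModel_inl_swap (i j : Fin n) (h : i ≠ j) :
    genModel (.inl ⟨(i, j), h⟩) = genModel (.inl ⟨(j, i), h.symm⟩) := by
  simp [genModel, Sym2.eq_swap]

def toModel (n : ℕ) : Ab n →* Model n :=
  Abelianization.lift <| PresentedGroup.toGroup fun _ hr =>
    lift_eq_one_of_mem_tvpRels genModel genModel_inr_sq genModel_inl_swap hr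

theorem toModel_toAb (x : FreeGroup (TVPGen n)) :
    toModel n (toAb n x) = FreeGroup.lift genModel x :=
  rfl

def ofModel (n : ℕ) : Model n →* Ab n :=
  (MonoidHom.piCoprod fun e => zpowersHom _ (edgeAb n e.1)).coprod
    (MonoidHom.piCoprod fun i => zmodPowersHom (toAb n (gamP i)) (toAb_gamP_sq i))

theorem ofModel_comp_toModel : (ofModel n).comp (toModel n) = MonoidHom.id _ := by
  refine Abelianization.hom_ext _ _ (PresentedGroup.ext ?_)
  rintro (⟨⟨i, j⟩, h⟩ | i)
  · show ofModel n (toModel n (toAb n (lamP i j h))) = toAb n (lamP i j h)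
    simp [toModel_toAb, ofModel, lamP, genModel, edgeAb_mk h]
  · show ofModel n (toModel n (toAb n (gamP i))) = toAb n (gamP i)
    simp [toModel_toAb, ofModel, gamP, genModel]

theorem toModel_comp_ofModel : (toModel n).comp (ofModel n) = MonoidHom.id _ := by
  apply MonoidHom.prod_ext
  · refine MonoidHom.functions_ext' _ _ _ fun e => MonoidHom.ext_mint ?_
    obtain ⟨z, hz⟩ := e
    induction z using Sym2.ind with | _ i j => ?_
    simp [ofModel, edgeAb_mk (Sym2.mk_isDiag_iff.not.1 hz), toModel_toAb, lamP, genModel]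
  · refine MonoidHom.functions_ext' _ _ _ fun i => MonoidHom.ext_mzmod ?_
    simp [ofModel, toModel_toAb, gamP, genModel]

theorem card_edge : Fintype.card (Edge n) = n * (n - 1) / 2 := by
  rw [Sym2.card_subtype_not_diag, Fintype.card_fin, Nat.choose_two_right]

end TVP

/-- The abelianization of TVPₙ is ℤ^{n(n-1)/2} ⊕ (ℤ/2ℤ)ⁿ. -/
theorem stmt3 (n : ℕ) :
    Nonempty (Abelianization (PresentedGroup (tvpRels n)) ≃*
      (Fin (n * (n - 1) / 2) → Multiplicative ℤ) ×
        (Fin n → Multiplicative (ZMod 2))) :=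
  ⟨((TVP.toModel n).toMulEquiv (TVP.ofModel n) TVP.ofModel_comp_toModel
      TVP.toModel_comp_ofModel).trans <|
    .prodCongr (.arrowCongr (Fintype.equivFinOfCardEq TVP.card_edge) (.refl _)) (.refl _)⟩
end

section
/- In the group VP₂ presented by generators λ₁₂, λ₂₁ with no relations (free group of rank 2), and TVP₂ ≅ Z * (Z/2Z × Z/2Z) with Z generated by λ₁₂, the assignment λ₁₂ ↦ λ₁₂ and λ₂₁ ↦ γ₁γ₂λ₁₂γ₂γ₁ defines an injective group homomorphism VP₂ → TVP₂. -/
/-- Generators of TVP₂: 0 = λ₁₂, 1 = γ₁, 2 = γ₂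
(the generator λ₂₁ = γ₂γ₁λ₁₂γ₁γ₂ has been eliminated). -/
def tvp2Rels : Set (FreeGroup (Fin 3)) :=
  {FreeGroup.of 1 ^ 2, FreeGroup.of 2 ^ 2,
   FreeGroup.of 1 * FreeGroup.of 2 * (FreeGroup.of 2 * FreeGroup.of 1)⁻¹}

/-- Action of `Perm (Fin 2)` on `FreeGroup (Fin 2)` by permuting generators. -/
def permAut : Equiv.Perm (Fin 2) →* MulAut (FreeGroup (Fin 2)) where
  toFun σ := FreeGroup.freeGroupCongr σ
  map_one' := by ext x; simp
  map_mul' σ τ := by ext x; exact (FreeGroup.map.comp _ _ _).symm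

/-- Target group: semidirect product of the free group with Perm (Fin 2). -/
abbrev TargetK := SemidirectProduct (FreeGroup (Fin 2)) (Equiv.Perm (Fin 2)) permAut

noncomputable def fgen : Fin 3 → TargetK :=
  ![SemidirectProduct.inl (FreeGroup.of 0), SemidirectProduct.inr (Equiv.swap 0 1), 1]

lemma fgen_rels : ∀ r ∈ tvp2Rels, FreeGroup.lift fgen r = 1 := by
  intro r hr
  rcases hr with h | h | h <;> subst h <;>
    simp only [map_pow, map_mul, map_inv, FreeGroup.lift_apply_of, fgen,
      Matrix.cons_val_one, Matrix.head_cons, Matrix.cons_val_zero]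
  all_goals first
    | (rw [sq, ← map_mul, Equiv.swap_mul_self, map_one])
    | simp

noncomputable def psi : PresentedGroup tvp2Rels →* TargetK :=
  PresentedGroup.toGroup fgen_rels

/-- VP₂ is the free group on λ₁₂ (= 0) and λ₂₁ (= 1). The assignment
λ₁₂ ↦ λ₁₂ and λ₂₁ ↦ γ₁γ₂λ₁₂γ₂γ₁ defines an injective homomorphism
VP₂ → TVP₂. -/
theorem stmt17 :
    Function.Injective
      (FreeGroup.lift
        (fun i : Fin 2 =>
          if i = 0 then (PresentedGroup.of 0 : PresentedGroup tvp2Rels)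
          else PresentedGroup.of 1 * PresentedGroup.of 2 * PresentedGroup.of 0 *
            PresentedGroup.of 2 * PresentedGroup.of 1)) := by
  have key : psi.comp (FreeGroup.lift
        (fun i : Fin 2 =>
          if i = 0 then (PresentedGroup.of 0 : PresentedGroup tvp2Rels)
          else PresentedGroup.of 1 * PresentedGroup.of 2 * PresentedGroup.of 0 *
            PresentedGroup.of 2 * PresentedGroup.of 1)) =
      (SemidirectProduct.inl : FreeGroup (Fin 2) →* TargetK) := by
    apply FreeGroup.ext_hom
    intro x
    fin_cases x
    · simp [psi, PresentedGroup.toGroup.of, fgen]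
    · simp only [MonoidHom.comp_apply, FreeGroup.lift_apply_of, Fin.mk_one,
        if_neg (by decide : ¬(1 : Fin 2) = 0),
        map_mul, psi, PresentedGroup.toGroup.of, fgen,
        Matrix.cons_val_one, Matrix.head_cons, Matrix.cons_val_zero]
      ext
      · simp [SemidirectProduct.mul_left, SemidirectProduct.mul_right, permAut,
          Equiv.swap_apply_left, SemidirectProduct.left_inl]
        rfl
      · simp [SemidirectProduct.mul_right]
  have hinj : Function.Injective (psi.comp (FreeGroup.lift
        (fun i : Fin 2 =>
          if i = 0 then (PresentedGroup.of 0 : PresentedGroup tvp2Rels)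
          else PresentedGroup.of 1 * PresentedGroup.of 2 * PresentedGroup.of 0 *
            PresentedGroup.of 2 * PresentedGroup.of 1))) := by
    rw [key]; exact SemidirectProduct.inl_injective
  exact Function.Injective.of_comp hinj
end
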